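/- arXiv:1605.09393 — 3 statements merged into one kernel-verified Lean document; each statement's English description precedes it below -/
import Mathlib

section
/- Let $R$ be a commutative ring, $\lambda \in R$, $F \in R[[t]]$, and $c \in \mathbb{N}$. Then the coefficient of $t^c$ in $(1+\lambda t)^{c} \cdot T_\lambda(F)$ equals the coefficient of $t^c$ in $F$; in particular, it is independent of $\lambda$. (This is the formal content of Lemma 4.1 of the paper: for a Chow class $A$ on a subscheme $Z$ of a pure-dimensional scheme $X$ and a line bundle $\mathscr{L}$ on $Z$, the term of dimension $\dim X - c$ in $c(\mathscr{L})^{c-1} \cap (A \otimes_X \mathscr{L})$ equals the term of dimension $\dim X - c$ in $A$.) -/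
open PowerSeries Finset

/-- The power series `1 + λ t`. -/
noncomputable def oneAdd {R : Type*} [CommRing R] (l : R) : PowerSeries R :=
  1 + PowerSeries.C l * PowerSeries.X

/-- The inverse power series `(1 + λ t)⁻¹`, via `invOfUnit` (constant coefficient `1`). -/
noncomputable def invOneAdd {R : Type*} [CommRing R] (l : R) : PowerSeries R :=
  PowerSeries.invOfUnit (oneAdd l) 1

/-- The tensor operation `T_λ`, defined coefficientwise:
`T_λ(∑ aᵢ tⁱ) = ∑ aᵢ tⁱ (1+λt)^{-(i+1)}`; the coefficient of `t^m` is the finite sum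
`∑_{i=0}^m aᵢ · [t^{m-i}] (1+λt)^{-(i+1)}`. -/
noncomputable def T {R : Type*} [CommRing R] (l : R) (F : PowerSeries R) : PowerSeries R :=
  PowerSeries.mk fun m => ∑ i ∈ Finset.range (m + 1),
    PowerSeries.coeff i F * PowerSeries.coeff (m - i) (invOneAdd l ^ (i + 1))

/-! Only the first `c + 1` summands of `T_λ(F)` contribute to `[t^c]`, and multiplying the `i`-th
one by `(1+λt)^c` gives `aᵢ tⁱ (1+λt)^{c-i-1}` for `i < c`, a polynomial of degree `< c`, and
`a_c t^c (1+λt)⁻¹` for `i = c`, whose coefficient of `t^c` is `a_c`. -/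

section

variable {R : Type*} [CommRing R] (l : R)

theorem oneAdd_mul_invOneAdd : oneAdd l * invOneAdd l = 1 :=
  mul_invOfUnit _ _ (by simp [oneAdd])

theorem oneAdd_eq_coe :
    oneAdd l = ((Polynomial.C l * Polynomial.X + 1 : Polynomial R) : R⟦X⟧) := by
  simp [oneAdd, add_comm]

theorem coeff_oneAdd_pow_of_lt {m n : ℕ} (h : m < n) : coeff n (oneAdd l ^ m) = 0 := by
  rw [oneAdd_eq_coe, ← Polynomial.coe_pow, Polynomial.coeff_coe]
  refine Polynomial.coeff_eq_zero_of_natDegree_lt ?_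
  calc _ ≤ m * 1 := Polynomial.natDegree_pow_le_of_le m Polynomial.natDegree_linear_le
    _ < n := by omega

theorem coeff_oneAdd_pow_mul_invOneAdd (n : ℕ) :
    coeff n (oneAdd l ^ n * invOneAdd l) = if n = 0 then 1 else 0 := by
  cases n with
  | zero => simp [invOneAdd]
  | succ k =>
    rw [pow_succ, mul_assoc, oneAdd_mul_invOneAdd, mul_one, coeff_oneAdd_pow_of_lt l k.lt_succ_self,
      if_neg k.succ_ne_zero]

theorem coeff_oneAdd_pow_mul_X_pow_mul_invOneAdd_pow {i c : ℕ} (h : i ≤ c) :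
    coeff c (oneAdd l ^ c * (X ^ i * invOneAdd l ^ (i + 1))) = if i = c then 1 else 0 := by
  have hcancel : (oneAdd l * invOneAdd l) ^ i = 1 := by rw [oneAdd_mul_invOneAdd, one_pow]
  have : oneAdd l ^ c * (X ^ i * invOneAdd l ^ (i + 1))
      = X ^ i * (oneAdd l ^ (c - i) * invOneAdd l) := by
    rw [← Nat.sub_add_cancel h, pow_add, Nat.add_sub_cancel]
    linear_combination (X ^ i * oneAdd l ^ (c - i) * invOneAdd l) * hcancel
  rw [this, coeff_X_pow_mul', if_pos h, coeff_oneAdd_pow_mul_invOneAdd]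
  simp only [Nat.sub_eq_zero_iff_le, h.ge_iff_eq', eq_comm]

variable (F : R⟦X⟧)

theorem coeff_T_eq_sum {m N : ℕ} (h : m ≤ N) :
    coeff m (T l F) =
      ∑ i ∈ range (N + 1), coeff i F * coeff m (X ^ i * invOneAdd l ^ (i + 1)) :=
  calc coeff m (T l F)
      = ∑ i ∈ range (m + 1), coeff i F * coeff m (X ^ i * invOneAdd l ^ (i + 1)) := by
        rw [T, coeff_mk]
        refine sum_congr rfl fun i hi => ?_
        rw [coeff_X_pow_mul', if_pos (mem_range_succ_iff.1 hi)]
    _ = _ := sum_subset (range_subset_range.2 (by omega)) fun i _ hi => by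
        rw [coeff_X_pow_mul', if_neg (by simpa [Nat.lt_succ_iff] using hi), mul_zero]

theorem coeff_mul_T (P : R⟦X⟧) (m : ℕ) :
    coeff m (P * T l F) =
      ∑ i ∈ range (m + 1), coeff i F * coeff m (P * (X ^ i * invOneAdd l ^ (i + 1))) := by
  simp only [coeff_mul _ P, mul_sum]
  rw [sum_comm]
  refine sum_congr rfl fun pq hpq => ?_
  rw [coeff_T_eq_sum l F (HasAntidiagonal.antidiagonal.snd_le hpq), mul_sum]
  exact sum_congr rfl fun i _ => mul_left_comm _ _ _

end

/-- The coefficient of `t^c` in `(1+λt)^c · T_λ(F)` equals the coefficient of `t^c` in `F`. -/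
theorem coeff_critical_degree_invariant {R : Type*} [CommRing R] (l : R) (F : PowerSeries R)
    (c : ℕ) :
    PowerSeries.coeff c (oneAdd l ^ c * T l F) = PowerSeries.coeff c F := by
  rw [coeff_mul_T, sum_eq_single_of_mem c (self_mem_range_succ c) fun i hi hic => ?_,
    coeff_oneAdd_pow_mul_X_pow_mul_invOneAdd_pow l le_rfl, if_pos rfl, mul_one]
  rw [coeff_oneAdd_pow_mul_X_pow_mul_invOneAdd_pow l (mem_range_succ_iff.1 hi), if_neg hic,
    mul_zero]
end

section
/- Let $R$ be a commutative ring, $\lambda \in R$, $e \in \mathbb{N}$, $x_1, \dots, x_e \in R$, and $F \in R[[t]]$. Then $(1+\lambda t)^{e} \cdot T_\lambda\Big( \prod_{j=1}^e (1+x_j t) \cdot F \Big) = \prod_{j=1}^e (1+(x_j+\lambda)t) \cdot T_\lambda(F)$. (This is the formal, split version of the compatibility $ (c(\mathscr{E}) \cap \alpha) \otimes \mathscr{L} = c(\mathscr{L})^{-\operatorname{rk}\mathscr{E}} c(\mathscr{E} \otimes \mathscr{L}) \cap (\alpha \otimes \mathscr{L})$ used repeatedly in the paper's proofs.) -/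
open PowerSeries Finset

/-! Writing `u = t/(1+λt)`, the operation is `T_λ(F) = (1+λt)⁻¹ · F(u)`: both sides agree
modulo `t^N` with `∑_{i<N} aᵢ tⁱ (1+λt)^{-(i+1)}`, for every `N`. Substitution of `u` is a
ring homomorphism, so `T_λ(G · F) = G(u) · T_λ(F)`, and `(1+λt)(1 + x u) = 1 + (x+λ)t` for each
factor of the product. -/

namespace PowerSeries

variable {R : Type*} [CommRing R]

theorem eq_of_forall_X_pow_dvd_sub {f g : R⟦X⟧} (h : ∀ N, X ^ N ∣ f - g) : f = g := by
  ext m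
  rw [← sub_eq_zero, ← map_sub]
  exact X_pow_dvd_iff.mp (h (m + 1)) m m.lt_succ_self

theorem X_pow_dvd_subst_sub_sum {a : R⟦X⟧} (ha : constantCoeff a = 0) (f : R⟦X⟧) (N : ℕ) :
    X ^ N ∣ f.subst a - ∑ i ∈ range N, C (coeff i f) * a ^ i := by
  have hX : ∀ d, (X : R⟦X⟧) ^ d ∣ a ^ d := fun d => pow_dvd_pow_of_dvd (X_dvd_iff.mpr ha) d
  refine X_pow_dvd_iff.mpr fun m hm => ?_
  rw [map_sub, coeff_subst' (.of_constantCoeff_zero' ha), map_sum, sub_eq_zero]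
  simp only [coeff_C_mul, smul_eq_mul]
  refine finsum_eq_sum_of_support_subset _ fun d hd => mem_range.mpr ?_
  by_contra! hNd
  exact hd (by dsimp only; rw [X_pow_dvd_iff.mp (hX d) m (by omega), mul_zero])

end PowerSeries

section TensorOperation

variable {R : Type*} [CommRing R] (l : R)

theorem constantCoeff_X_mul_invOneAdd : constantCoeff (X * invOneAdd l) = 0 := by
  simp

theorem hasSubst_X_mul_invOneAdd : HasSubst (X * invOneAdd l) :=
  .of_constantCoeff_zero' (constantCoeff_X_mul_invOneAdd l)

theorem X_pow_dvd_T_sub_sum (F : R⟦X⟧) (N : ℕ) :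
    X ^ N ∣ T l F - ∑ i ∈ range N, C (coeff i F) * (X ^ i * invOneAdd l ^ (i + 1)) := by
  refine X_pow_dvd_iff.mpr fun m hm => ?_
  rw [map_sub, sub_eq_zero, T, coeff_mk, map_sum]
  simp only [coeff_C_mul, coeff_X_pow_mul']
  refine sum_subset_zero_on_sdiff (range_subset_range.mpr (by omega))
    (fun i hi => ?_) (fun i hi => ?_)
  · rw [if_neg (by simp_all), mul_zero]
  · rw [if_pos (by simpa [Nat.lt_succ_iff] using hi)]

theorem T_eq_invOneAdd_mul_subst (F : R⟦X⟧) :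
    T l F = invOneAdd l * F.subst (X * invOneAdd l) := by
  refine eq_of_forall_X_pow_dvd_sub fun N => ?_
  have hsum : invOneAdd l * ∑ i ∈ range N, C (coeff i F) * (X * invOneAdd l) ^ i =
      ∑ i ∈ range N, C (coeff i F) * (X ^ i * invOneAdd l ^ (i + 1)) := by
    rw [mul_sum]
    exact sum_congr rfl fun i _ => by ring
  convert dvd_sub (X_pow_dvd_T_sub_sum l F N)
    ((X_pow_dvd_subst_sub_sum (constantCoeff_X_mul_invOneAdd l) F N).mul_left
      (invOneAdd l)) using 1
  rw [mul_sub, hsum]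
  abel

theorem T_mul (G F : R⟦X⟧) : T l (G * F) = G.subst (X * invOneAdd l) * T l F := by
  rw [T_eq_invOneAdd_mul_subst, T_eq_invOneAdd_mul_subst,
    subst_mul (hasSubst_X_mul_invOneAdd l)]
  ring

theorem oneAdd_mul_subst_oneAdd (c : R) :
    oneAdd l * (oneAdd c).subst (X * invOneAdd l) = oneAdd (c + l) := by
  have ha := hasSubst_X_mul_invOneAdd l
  have hC : substAlgHom ha (C c) = C c := (substAlgHom ha).commutes c
  have hinv : (1 + C l * X) * invOneAdd l = 1 := oneAdd_mul_invOneAdd l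
  rw [← coe_substAlgHom ha]
  simp only [oneAdd, map_add, map_one, map_mul, substAlgHom_X, hC]
  linear_combination C c * X * hinv

end TensorOperation

/-- `(1+λt)^e · T_λ(∏(1+xⱼt) · F) = ∏(1+(xⱼ+λ)t) · T_λ(F)`. -/
theorem tensor_op_chern_compat {R : Type*} [CommRing R] (l : R) (e : ℕ) (x : Fin e → R)
    (F : PowerSeries R) :
    oneAdd l ^ e * T l ((∏ j, oneAdd (x j)) * F) =
      (∏ j, oneAdd (x j + l)) * T l F := by
  rw [T_mul, ← mul_assoc, ← coe_substAlgHom (hasSubst_X_mul_invOneAdd l), map_prod,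
    ← Fin.prod_const, ← prod_mul_distrib]
  simp only [coe_substAlgHom, oneAdd_mul_subst_oneAdd]
end

section
/- Let $R$ be a commutative ring, $d \in R$, $n \in \mathbb{N}$, and let $S \in R[t]$ be a polynomial of degree at most $n$, viewed as an element of $R[[t]]$. For $0 \le i \le n$ let $a_i$ be the coefficient of $t^i$ in $T_{-d}(S)$. Then $\sum_{i=0}^n a_i\, t^i\, (1+d t)^{n-i} \equiv (1+d t)^{n+1}\, S(t) \pmod{t^{n+1}}$, i.e., the coefficients of $t^m$ on the two sides agree for all $0 \le m \le n$. (This is the formal content of the identity $A(H) = \left[(1+dH)^{n+1} S_Z(H)\right]_n + d^{n+1}H^{n+1}$ relating the numerator of the Segre zeta function to the polynomial $S_Z$ with $\iota_* s(Z,\mathbb{P}^n) = S_Z(H) \cap [\mathbb{P}^n]$, where $[\cdot]_n$ denotes truncation to degree $n$.) -/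
/-! With `w = (1 - d t)⁻¹`, the coefficients `[tᵏ] w ^ (q + 1)` and `[tᵏ] (1 + d t) ^ (q + k)`
coincide (both are `C(q + k, k) dᵏ`). So in degree `m ≤ n` each `(1 + d t) ^ (n - i)` on the left
may be replaced by `w ^ (n - m + 1)`, turning the left side into `[tᵐ] T_{-d}(S) · w ^ (n - m + 1)`.
Modulo `t ^ (m + 1)`, `T_{-d}(S)` is the finite sum `∑ sⱼ tʲ w ^ (j + 1)`, and the same coincidence
turns each `[t^{m-j}] w ^ (n - m + j + 2)` into `[t^{m-j}] (1 + d t) ^ (n + 1)`. -/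

open PowerSeries Finset

section

variable {R : Type*} [CommRing R]

lemma invOneAdd_eq_rescale (l : R) :
    invOneAdd l = rescale (-l) (mk 1) := by
  refine left_inv_eq_right_inv (a := oneAdd l)
    (invOfUnit_mul _ 1 (by simp [oneAdd])) ?_
  have h := congrArg (rescale (-l)) (mk_one_mul_one_sub_eq_one (S := R))
  rw [map_mul, map_sub, map_one, rescale_X, map_neg, neg_mul, sub_neg_eq_add] at h
  rw [mul_comm, oneAdd, h]

lemma coeff_invOneAdd_pow (l : R) (q k : ℕ) :
    coeff k (invOneAdd l ^ (q + 1)) = (-l) ^ k * ((q + k).choose q : R) := by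
  rw [invOneAdd_eq_rescale, ← map_pow, mk_one_pow_eq_mk_choose_add, coeff_rescale, coeff_mk]

lemma coeff_oneAdd_pow (d : R) (p k : ℕ) :
    coeff k (oneAdd d ^ p) = d ^ k * (p.choose k : R) := by
  have : oneAdd d = rescale d ((1 + Polynomial.X : Polynomial R) : PowerSeries R) := by
    simp [oneAdd, rescale_X]
  rw [this, ← map_pow, ← Polynomial.coe_pow, coeff_rescale, Polynomial.coeff_coe,
    Polynomial.coeff_one_add_X_pow]

lemma coeff_invOneAdd_neg_pow (d : R) (q k : ℕ) :
    coeff k (invOneAdd (-d) ^ (q + 1)) = coeff k (oneAdd d ^ (q + k)) := by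
  rw [coeff_invOneAdd_pow, coeff_oneAdd_pow, neg_neg, Nat.choose_symm_add]

lemma coeff_mul_eq_sum_range (F G : PowerSeries R) (m : ℕ) :
    coeff m (F * G) = ∑ i ∈ range (m + 1), coeff i F * coeff (m - i) G := by
  rw [coeff_mul, Finset.Nat.sum_antidiagonal_eq_sum_range_succ_mk]

lemma coeff_sum_C_mul_X_pow_mul (c : ℕ → R) (f : ℕ → PowerSeries R)
    {m N : ℕ} (hm : m ≤ N) :
    coeff m (∑ i ∈ range (N + 1), C (c i) * X ^ i * f i) =
      ∑ i ∈ range (m + 1), c i * coeff (m - i) (f i) := by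
  simp_rw [map_sum, mul_assoc, coeff_C_mul, coeff_X_pow_mul', mul_ite, mul_zero,
    ← Finset.sum_filter]
  congr 1
  ext i
  simp only [Finset.mem_filter, Finset.mem_range]
  omega

lemma coeff_T_mul (l : R) (F G : PowerSeries R) (m : ℕ) :
    coeff m (T l F * G) =
      ∑ j ∈ range (m + 1), coeff j F * coeff (m - j) (invOneAdd l ^ (j + 1) * G) := by
  set B := ∑ j ∈ range (m + 1), C (coeff j F) * X ^ j * invOneAdd l ^ (j + 1)
  have hB : X ^ (m + 1) ∣ T l F - B := X_pow_dvd_iff.2 fun k hk => by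
    rw [map_sub, sub_eq_zero, coeff_sum_C_mul_X_pow_mul _ _ (by omega), T, coeff_mk]
  have hBG : coeff m ((T l F - B) * G) = 0 :=
    X_pow_dvd_iff.1 (dvd_mul_of_dvd_left hB G) m (by omega)
  rw [← sub_add_cancel (T l F) B, add_mul, map_add, hBG, zero_add, Finset.sum_mul]
  simp_rw [mul_assoc _ _ G]
  exact coeff_sum_C_mul_X_pow_mul _ _ le_rfl

end

theorem segre_zeta_numerator_general {R : Type*} [CommRing R] (d : R) (n : ℕ) (S : Polynomial R)
    (a : ℕ → R)
    (ha : ∀ i, a i = PowerSeries.coeff i (T (-d) (S : PowerSeries R))) :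
    ∀ m ≤ n,
      PowerSeries.coeff m (∑ i ∈ Finset.range (n + 1),
          PowerSeries.C (a i) * PowerSeries.X ^ i * oneAdd d ^ (n - i)) =
        PowerSeries.coeff m (oneAdd d ^ (n + 1) * (S : PowerSeries R)) := by
  intro m hm
  calc _ = ∑ i ∈ range (m + 1), a i * coeff (m - i) (oneAdd d ^ (n - i)) :=
        coeff_sum_C_mul_X_pow_mul _ _ hm
    _ = ∑ i ∈ range (m + 1),
          coeff i (T (-d) (S : PowerSeries R)) * coeff (m - i) (invOneAdd (-d) ^ (n - m + 1)) :=
        Finset.sum_congr rfl fun i hi => by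
          have : i ≤ m := Nat.lt_succ_iff.1 (Finset.mem_range.1 hi)
          rw [ha, coeff_invOneAdd_neg_pow, show n - m + (m - i) = n - i by omega]
    _ = ∑ j ∈ range (m + 1), coeff j (S : PowerSeries R) *
          coeff (m - j) (invOneAdd (-d) ^ (j + 1) * invOneAdd (-d) ^ (n - m + 1)) := by
        rw [← coeff_mul_eq_sum_range, coeff_T_mul]
    _ = ∑ j ∈ range (m + 1), coeff j (S : PowerSeries R) * coeff (m - j) (oneAdd d ^ (n + 1)) :=
        Finset.sum_congr rfl fun j hj => by
          have : j ≤ m := Nat.lt_succ_iff.1 (Finset.mem_range.1 hj)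
          rw [← pow_add, show j + 1 + (n - m + 1) = (n - m + j + 1) + 1 by omega,
            coeff_invOneAdd_neg_pow, show n - m + j + 1 + (m - j) = n + 1 by omega]
    _ = _ := by rw [mul_comm, coeff_mul_eq_sum_range]

/-- The numerator of the Segre zeta function: if `aᵢ = [tⁱ] T_{-d}(S)` then
`∑_{i=0}^n aᵢ tⁱ (1+dt)^{n-i} ≡ (1+dt)^{n+1} S(t) (mod t^{n+1})`. -/
theorem segre_zeta_numerator {R : Type*} [CommRing R] (d : R) (n : ℕ) (S : Polynomial R)
    (hS : S.natDegree ≤ n) (a : ℕ → R)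
    (ha : ∀ i, a i = PowerSeries.coeff i (T (-d) (S : PowerSeries R))) :
    ∀ m ≤ n,
      PowerSeries.coeff m (∑ i ∈ Finset.range (n + 1),
          PowerSeries.C (a i) * PowerSeries.X ^ i * oneAdd d ^ (n - i)) =
        PowerSeries.coeff m (oneAdd d ^ (n + 1) * (S : PowerSeries R)) :=
  segre_zeta_numerator_general d n S a ha
end
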